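/- arXiv:2304.06648 — 2 statements merged into one kernel-verified Lean document; each statement's English description precedes it below -/
import Mathlib

section
/- Let f : ℝ → ℝ be a measurable function that grows at most linearly, let W ∈ ℝ^{D×D} and b ∈ ℝ^D be fixed, let ε ~ N(0, I_D) be a standard Gaussian vector in ℝ^D, and set h = Wε + b ∈ ℝ^D. Then there exists a constant K > 0, depending only on f, W and b (and in particular not on γ), such that for every unit vector γ ∈ ℝ^D (‖γ‖₂ = 1) and every p ≥ 1, (E[(∑_{j=1}^D γ_j f(h_j))^{2p}])^{1/p} ≤ K · p; that is, the square of the linear combination ∑_j γ_j f(h_j) is sub-exponential with sub-exponential norm at most K, uniformly over the unit sphere. -/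
open MeasureTheory ProbabilityTheory Real
open scoped ENNReal NNReal

set_option maxHeartbeats 1000000


lemma gauss_density_mul (g : ℝ → ℝ) :
    ∫ x, g x ∂(gaussianReal 0 1) = ∫ x, gaussianPDFReal 0 1 x * g x := by
  rw [gaussianReal_of_var_ne_zero 0 one_ne_zero, gaussianPDF_def]
  have : (fun x => ENNReal.ofReal (gaussianPDFReal 0 1 x))
      = fun x => ((fun x => (gaussianPDFReal 0 1 x).toNNReal) x : ℝ≥0∞) := rfl
  rw [this, integral_withDensity_eq_integral_smul
    ((measurable_gaussianPDFReal 0 1).real_toNNReal)]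
  congr 1
  ext x
  simp [NNReal.smul_def, Real.coe_toNNReal _ (gaussianPDFReal_nonneg 0 1 x)]

lemma pdf_exp_eq (x : ℝ) :
    gaussianPDFReal 0 1 x * Real.exp (x^2/4) = (Real.sqrt (2*π))⁻¹ * Real.exp (-(1/4) * x^2) := by
  rw [gaussianPDFReal]
  push_cast
  rw [mul_assoc, ← Real.exp_add]
  ring_nf

lemma exp_sq_integrable : Integrable (fun x : ℝ => Real.exp (x^2/4)) (gaussianReal 0 1) := by
  rw [gaussianReal_of_var_ne_zero 0 one_ne_zero, gaussianPDF_def]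
  have h1 : (fun x => ENNReal.ofReal (gaussianPDFReal 0 1 x))
      = fun x => ((fun x => (gaussianPDFReal 0 1 x).toNNReal) x : ℝ≥0∞) := rfl
  rw [h1, integrable_withDensity_iff_integrable_smul
    ((measurable_gaussianPDFReal 0 1).real_toNNReal)]
  have h2 : (fun x : ℝ => (gaussianPDFReal 0 1 x).toNNReal • Real.exp (x^2/4))
      = fun x => (Real.sqrt (2*π))⁻¹ * Real.exp (-(1/4) * x^2) := by
    ext x
    rw [NNReal.smul_def, Real.coe_toNNReal _ (gaussianPDFReal_nonneg 0 1 x), smul_eq_mul, pdf_exp_eq]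
  rw [h2]
  exact (integrable_exp_neg_mul_sq (by norm_num)).const_mul _

lemma exp_sq_integral : ∫ x, Real.exp (x^2/4) ∂(gaussianReal 0 1) = Real.sqrt 2 := by
  rw [gauss_density_mul]
  simp_rw [pdf_exp_eq]
  rw [integral_const_mul, integral_gaussian]
  have h4 : π / (1/4 : ℝ) = 4 * π := by ring
  rw [h4, Real.sqrt_mul (by norm_num : (0:ℝ) ≤ 4) π, Real.sqrt_mul (by norm_num : (0:ℝ) ≤ 2) π]
  have h2 : Real.sqrt 2 * Real.sqrt 2 = 2 := Real.mul_self_sqrt (by norm_num)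
  have hs4 : Real.sqrt 4 = 2 := by
    rw [show (4:ℝ) = 2^2 by norm_num, Real.sqrt_sq (by norm_num : (0:ℝ) ≤ 2)]
  have hπ : Real.sqrt π ≠ 0 := ne_of_gt (Real.sqrt_pos.2 pi_pos)
  have h2' : Real.sqrt 2 ≠ 0 := by positivity
  rw [hs4]
  field_simp
  rw [sq, h2]



lemma pi_exp_integrable (D : ℕ) :
    Integrable (fun x : Fin D → ℝ => ∏ k, Real.exp ((x k)^2/4))
      (Measure.pi fun _ : Fin D => gaussianReal 0 1) := by
  letI : MeasureSpace ℝ := ⟨gaussianReal 0 1⟩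
  have : SigmaFinite (volume : Measure ℝ) := by
    have : IsProbabilityMeasure (volume : Measure ℝ) :=
      inferInstanceAs (IsProbabilityMeasure (gaussianReal 0 1))
    infer_instance
  exact Integrable.fintype_prod (f := fun _ : Fin D => fun x : ℝ => Real.exp (x^2/4))
    (fun _ => exp_sq_integrable)

lemma pi_exp_integral (D : ℕ) :
    ∫ x : Fin D → ℝ, ∏ k, Real.exp ((x k)^2/4)
      ∂(Measure.pi fun _ : Fin D => gaussianReal 0 1) = (Real.sqrt 2) ^ D := by
  letI : MeasureSpace ℝ := ⟨gaussianReal 0 1⟩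
  have : SigmaFinite (volume : Measure ℝ) := by
    have : IsProbabilityMeasure (volume : Measure ℝ) :=
      inferInstanceAs (IsProbabilityMeasure (gaussianReal 0 1))
    infer_instance
  have h := MeasureTheory.integral_fintype_prod_eq_pow (ι := Fin D) (μ := (volume : Measure ℝ))
    (fun x : ℝ => Real.exp (x^2/4))
  have h1 : ∫ x : ℝ, Real.exp (x^2/4) = Real.sqrt 2 := exp_sq_integral
  rw [h1, Fintype.card_fin] at h
  exact h


lemma key_rpow_exp {z p : ℝ} (hz : 0 ≤ z) (hp : 1 ≤ p) : z ^ p ≤ p ^ p * Real.exp z := by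
  have hp0 : (0:ℝ) < p := lt_of_lt_of_le one_pos hp
  rcases eq_or_lt_of_le hz with h0 | h0
  · rw [← h0, Real.zero_rpow (ne_of_gt hp0)]; positivity
  · rw [Real.rpow_def_of_pos h0, Real.rpow_def_of_pos hp0, ← Real.exp_add]
    apply Real.exp_le_exp.2
    have hlog := Real.log_le_sub_one_of_pos (div_pos h0 hp0)
    rw [Real.log_div (ne_of_gt h0) (ne_of_gt hp0)] at hlog
    have h1 : p * (Real.log z - Real.log p) ≤ p * (z/p - 1) :=
      mul_le_mul_of_nonneg_left hlog hp0.le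
    have h2 : p * (z/p - 1) = z - p := by field_simp
    nlinarith [h1, h2, hp0]

/-- For measurable `f : ℝ → ℝ` growing at most linearly, fixed
`W ∈ ℝ^{D×D}` and `b ∈ ℝ^D`, and `ε ~ N(0, I_D)` with `h = Wε + b`, there is a
constant `K > 0` (depending only on `f, W, b`) such that for every unit vector `γ`
and every `p ≥ 1`, `(E[(∑ j, γ j * f (h j))^(2p)])^(1/p) ≤ K * p`, i.e. the square of
`∑ j, γ j * f (h j)` is sub-exponential with norm at most `K`, uniformly over the sphere. -/
theorem stmt_3 (D : ℕ) (f : ℝ → ℝ) (hf : Measurable f)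
    (a b₀ : ℝ) (ha : 0 ≤ a) (hb₀ : 0 ≤ b₀) (hgrow : ∀ x, |f x| ≤ a * |x| + b₀)
    (W : Matrix (Fin D) (Fin D) ℝ) (b : Fin D → ℝ) :
    ∃ K : ℝ, 0 < K ∧
      ∀ γ : Fin D → ℝ, (∑ j, (γ j) ^ 2 = 1) →
        ∀ p : ℝ, 1 ≤ p →
          (∫ x : Fin D → ℝ,
              |∑ j, γ j * f (∑ k, W j k * x k + b j)| ^ (2 * p)
              ∂(Measure.pi fun _ : Fin D => gaussianReal 0 1)) ^ (1 / p)
            ≤ K * p := by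
  set μ := Measure.pi fun _ : Fin D => gaussianReal 0 1 with hμ
  set Wm : ℝ := ∑ j, ∑ k, |W j k| with hWm
  set Bm : ℝ := ∑ j, |b j| with hBm
  have hWm0 : 0 ≤ Wm := Finset.sum_nonneg fun j _ =>
    Finset.sum_nonneg fun k _ => abs_nonneg _
  have hBm0 : 0 ≤ Bm := Finset.sum_nonneg fun j _ => abs_nonneg _
  set Ag : ℝ := (D:ℝ) * (a * Wm) with hAg
  set Bg : ℝ := (D:ℝ) * (a * Bm + b₀) with hBg
  have hAg0 : 0 ≤ Ag := by positivity
  have hBg0 : 0 ≤ Bg := by positivity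
  set C' : ℝ := 2*Ag^2*(D:ℝ) + 2*Bg^2 + 1 with hC'
  have hC1 : 1 ≤ C' := by
    have t1 : (0:ℝ) ≤ 2*Ag^2*(D:ℝ) := by positivity
    have t2 : (0:ℝ) ≤ 2*Bg^2 := by positivity
    rw [hC']; linarith
  have hC0 : 0 < C' := lt_of_lt_of_le one_pos hC1
  have hsq2 : (1:ℝ) ≤ Real.sqrt 2 := by
    rw [show (1:ℝ) = Real.sqrt 1 by simp]
    exact Real.sqrt_le_sqrt (by norm_num)
  set A : ℝ := Real.exp (1/4) * (Real.sqrt 2)^D with hA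
  have hA1 : 1 ≤ A := by
    have h1 : (1:ℝ) ≤ Real.exp (1/4) := Real.one_le_exp (by norm_num)
    have h2 : (1:ℝ) ≤ (Real.sqrt 2)^D := one_le_pow₀ hsq2
    nlinarith
  have hA0 : 0 < A := lt_of_lt_of_le one_pos hA1
  refine ⟨4*C'*A, by positivity, ?_⟩
  intro γ hγ p hp
  have hp0 : (0:ℝ) < p := lt_of_lt_of_le one_pos hp
  -- pointwise bound on |S x|
  have hSbound : ∀ x : Fin D → ℝ,
      |∑ j, γ j * f (∑ k, W j k * x k + b j)| ≤ Ag * (∑ k, |x k|) + Bg := by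
    intro x
    have hγ1 : ∀ j, |γ j| ≤ 1 := by
      intro j
      have h1 : γ j ^ 2 ≤ 1 := by
        rw [← hγ]
        exact Finset.single_le_sum (fun i _ => sq_nonneg (γ i)) (Finset.mem_univ j)
      rw [abs_le_one_iff_mul_self_le_one]
      nlinarith
    have habs0 : 0 ≤ ∑ k, |x k| := Finset.sum_nonneg fun k _ => abs_nonneg _
    calc |∑ j, γ j * f (∑ k, W j k * x k + b j)|
        ≤ ∑ j, |γ j * f (∑ k, W j k * x k + b j)| := Finset.abs_sum_le_sum_abs _ _
      _ ≤ ∑ j : Fin D, (a * (Wm * (∑ k, |x k|) + Bm) + b₀) := by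
          apply Finset.sum_le_sum
          intro j _
          rw [abs_mul]
          have hh : |∑ k, W j k * x k + b j| ≤ Wm * (∑ k, |x k|) + Bm := by
            calc |∑ k, W j k * x k + b j|
                ≤ |∑ k, W j k * x k| + |b j| := abs_add_le _ _
              _ ≤ (∑ k, |W j k * x k|) + |b j| := by
                  exact add_le_add_left (Finset.abs_sum_le_sum_abs _ _) _
              _ ≤ Wm * (∑ k, |x k|) + Bm := by
                  apply add_le_add
                  · rw [Finset.mul_sum]
                    apply Finset.sum_le_sum
                    intro k _
                    rw [abs_mul]
                    apply mul_le_mul_of_nonneg_right _ (abs_nonneg _)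
                    calc |W j k| ≤ ∑ k', |W j k'| :=
                          Finset.single_le_sum (f := fun k' => |W j k'|)
                            (fun k' _ => abs_nonneg _) (Finset.mem_univ k)
                      _ ≤ Wm := Finset.single_le_sum
                          (f := fun j' => ∑ k', |W j' k'|)
                          (fun j' _ => Finset.sum_nonneg fun k' _ => abs_nonneg _)
                          (Finset.mem_univ j)
                  · exact Finset.single_le_sum (f := fun j' => |b j'|) (fun j' _ => abs_nonneg _) (Finset.mem_univ j)
          have hfj : |f (∑ k, W j k * x k + b j)| ≤ a * (Wm * (∑ k, |x k|) + Bm) + b₀ := by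
            calc |f (∑ k, W j k * x k + b j)|
                ≤ a * |∑ k, W j k * x k + b j| + b₀ := hgrow _
              _ ≤ a * (Wm * (∑ k, |x k|) + Bm) + b₀ := by
                  exact add_le_add_left (mul_le_mul_of_nonneg_left hh ha) _
          calc |γ j| * |f (∑ k, W j k * x k + b j)|
              ≤ 1 * (a * (Wm * (∑ k, |x k|) + Bm) + b₀) := by
                apply mul_le_mul (hγ1 j) hfj (abs_nonneg _) (by norm_num)
            _ = a * (Wm * (∑ k, |x k|) + Bm) + b₀ := one_mul _
      _ = (D:ℝ) * (a * (Wm * (∑ k, |x k|) + Bm) + b₀) := by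
          rw [Finset.sum_const, Finset.card_univ, Fintype.card_fin, nsmul_eq_mul]
      _ = Ag * (∑ k, |x k|) + Bg := by rw [hAg, hBg]; ring
  -- squared bound
  have hS2 : ∀ x : Fin D → ℝ,
      (∑ j, γ j * f (∑ k, W j k * x k + b j)) ^ 2 ≤ C' * (1 + ∑ k, (x k)^2) := by
    intro x
    set S := ∑ j, γ j * f (∑ k, W j k * x k + b j) with hSdef
    set g := ∑ k, |x k| with hgdef
    have hg0 : 0 ≤ g := Finset.sum_nonneg fun k _ => abs_nonneg _
    have h1 : S^2 ≤ (Ag * g + Bg)^2 := by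
      have := hSbound x
      rw [← hgdef, ← hSdef] at this
      nlinarith [abs_nonneg S, sq_abs S, this]
    have h2 : g^2 ≤ (D:ℝ) * ∑ k, (x k)^2 := by
      have := sq_sum_le_card_mul_sum_sq (s := Finset.univ) (f := fun k => |x k|)
      simp only [sq_abs, Finset.card_univ, Fintype.card_fin] at this
      exact_mod_cast this
    have hsum0 : 0 ≤ ∑ k, (x k)^2 := Finset.sum_nonneg fun k _ => sq_nonneg _
    nlinarith [sq_nonneg (Ag*g - Bg), sq_nonneg Ag, mul_le_mul_of_nonneg_left h2 (mul_nonneg (by norm_num : (0:ℝ) ≤ 2) (sq_nonneg Ag))]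
  -- pointwise rpow bound
  have hpt : ∀ x : Fin D → ℝ,
      |∑ j, γ j * f (∑ k, W j k * x k + b j)| ^ (2*p)
        ≤ ((4*C'*p)^p * Real.exp (1/4)) * ∏ k, Real.exp ((x k)^2/4) := by
    intro x
    set S := ∑ j, γ j * f (∑ k, W j k * x k + b j) with hSdef
    set T := ∑ k, (x k)^2 with hT
    have hT0 : 0 ≤ T := Finset.sum_nonneg fun k _ => sq_nonneg _
    have e1 : |S| ^ (2*p) = (S^2) ^ p := by
      rw [Real.rpow_mul (abs_nonneg S)]
      congr 1
      rw [show (2:ℝ) = ((2:ℕ):ℝ) by norm_num, Real.rpow_natCast, sq_abs]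
    rw [e1]
    have e2 : (S^2) ^ p ≤ (C' * (1+T)) ^ p :=
      Real.rpow_le_rpow (sq_nonneg S) (hS2 x) hp0.le
    have e3 : (C' * (1+T)) ^ p = C' ^ p * 4 ^ p * ((1+T)/4) ^ p := by
      rw [show C' * (1+T) = C' * 4 * ((1+T)/4) by ring,
        Real.mul_rpow (by positivity) (by positivity),
        Real.mul_rpow (le_of_lt hC0) (by norm_num)]
    have e4 : ((1+T)/4) ^ p ≤ p ^ p * Real.exp ((1+T)/4) :=
      key_rpow_exp (by positivity) hp
    have e5 : Real.exp ((1+T)/4) = Real.exp (1/4) * ∏ k, Real.exp ((x k)^2/4) := by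
      rw [← Real.exp_sum, ← Real.exp_add]
      congr 1
      rw [hT, add_div, Finset.sum_div]
    have e6 : C' ^ p * 4 ^ p * p ^ p = (4*C'*p) ^ p := by
      rw [Real.mul_rpow (by positivity) hp0.le,
        Real.mul_rpow (by norm_num) (le_of_lt hC0)]
      ring
    calc (S^2) ^ p ≤ C' ^ p * 4 ^ p * ((1+T)/4) ^ p := le_trans e2 (le_of_eq e3)
      _ ≤ C' ^ p * 4 ^ p * (p ^ p * Real.exp ((1+T)/4)) := by
          apply mul_le_mul_of_nonneg_left e4 (by positivity)
      _ = ((4*C'*p)^p * Real.exp (1/4)) * ∏ k, Real.exp ((x k)^2/4) := by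
          rw [e5, ← e6]; ring
  -- integral bound
  have hIntDom : Integrable (fun x : Fin D → ℝ =>
      ((4*C'*p)^p * Real.exp (1/4)) * ∏ k, Real.exp ((x k)^2/4)) μ :=
    (pi_exp_integrable D).const_mul _
  have hInt : (∫ x : Fin D → ℝ, |∑ j, γ j * f (∑ k, W j k * x k + b j)| ^ (2*p) ∂μ)
      ≤ (4*C'*p)^p * A := by
    calc (∫ x : Fin D → ℝ, |∑ j, γ j * f (∑ k, W j k * x k + b j)| ^ (2*p) ∂μ)
        ≤ ∫ x : Fin D → ℝ, ((4*C'*p)^p * Real.exp (1/4)) * ∏ k, Real.exp ((x k)^2/4) ∂μ := by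
          apply integral_mono_of_nonneg
          · exact Filter.Eventually.of_forall fun x => Real.rpow_nonneg (abs_nonneg _) _
          · exact hIntDom
          · exact Filter.Eventually.of_forall hpt
      _ = ((4*C'*p)^p * Real.exp (1/4)) * (Real.sqrt 2)^D := by
          rw [integral_const_mul, pi_exp_integral D]
      _ = (4*C'*p)^p * A := by rw [hA]; ring
  -- conclude
  have hLHS0 : 0 ≤ ∫ x : Fin D → ℝ, |∑ j, γ j * f (∑ k, W j k * x k + b j)| ^ (2*p) ∂μ :=
    integral_nonneg fun x => Real.rpow_nonneg (abs_nonneg _) _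
  have h4Cp : (0:ℝ) < 4*C'*p := by positivity
  calc (∫ x : Fin D → ℝ, |∑ j, γ j * f (∑ k, W j k * x k + b j)| ^ (2*p) ∂μ) ^ (1/p)
      ≤ ((4*C'*p)^p * A) ^ (1/p) := Real.rpow_le_rpow hLHS0 hInt (by positivity)
    _ = (4*C'*p) * A ^ (1/p) := by
        rw [Real.mul_rpow (Real.rpow_nonneg h4Cp.le p) hA0.le,
          ← Real.rpow_mul h4Cp.le, mul_one_div_cancel (ne_of_gt hp0), Real.rpow_one]
    _ ≤ (4*C'*p) * A := by
        apply mul_le_mul_of_nonneg_left _ h4Cp.le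
        calc A ^ (1/p) ≤ A ^ (1:ℝ) :=
              Real.rpow_le_rpow_of_exponent_le hA1 (by rw [div_le_one hp0]; exact hp)
          _ = A := Real.rpow_one A
    _ = 4*C'*A * p := by ring
end

section
/- Let f : ℝ → ℝ be a measurable function that grows at most linearly, let W ∈ ℝ^{D×D} and b ∈ ℝ^D be fixed, and let ε_1, …, ε_m be independent N(0, I_D) Gaussian vectors with h_i = W ε_i + b ∈ ℝ^D. Fix a unit vector γ ∈ ℝ^D (‖γ‖₂ = 1) and set E_γ := E[(∑_{j=1}^D f(h_{1,j}) γ_j)²]. Then there exists a constant c > 0, depending only on f, W and b, such that for every ε ∈ (0, 1), P( | (1/m) ∑_{i=1}^m (∑_{j=1}^D f(h_{i,j}) γ_j)² − E_γ | ≥ ε ) ≤ 2 exp(−c m ε²). -/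
open MeasureTheory ProbabilityTheory

lemma aux_exp_taylor (t : ℝ) : Real.exp t ≤ 1 + t + t ^ 2 * Real.exp |t| := by
  rcases le_or_gt |t| 1 with h | h
  · have h2 := Real.abs_exp_sub_one_sub_id_le h
    have h3 : (1 : ℝ) ≤ Real.exp |t| := Real.one_le_exp (abs_nonneg t)
    have h4 := abs_le.mp h2
    nlinarith [sq_nonneg t]
  · rcases le_or_gt 0 t with ht | ht
    · have h1 : (1 : ℝ) ≤ t := by rw [abs_of_nonneg ht] at h; linarith
      have h1' : (1:ℝ) ≤ t ^ 2 := by nlinarith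
      have h2 : Real.exp t ≤ t ^ 2 * Real.exp |t| := by
        rw [abs_of_nonneg ht]
        nlinarith [Real.exp_pos t]
      linarith
    · have h1 : t ≤ -1 := by rw [abs_of_neg ht] at h; linarith
      have h2 : Real.exp t ≤ 1 := Real.exp_le_one_iff.mpr (by linarith)
      have h4 : (1:ℝ) ≤ Real.exp |t| := Real.one_le_exp (abs_nonneg t)
      nlinarith [sq_nonneg t]


lemma aux_sq_le_exp {u : ℝ} (hu : 0 ≤ u) : u ^ 2 ≤ 4 * Real.exp u := by
  have h1 : u / 2 ≤ Real.exp (u / 2) := by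
    have := Real.add_one_le_exp (u / 2); linarith
  have h2 : (u / 2) ^ 2 ≤ Real.exp (u / 2) ^ 2 := by
    apply pow_le_pow_left₀ (by linarith) h1
  have h3 : Real.exp (u / 2) ^ 2 = Real.exp u := by
    rw [pow_two, ← Real.exp_add]; ring_nf
  nlinarith



lemma aux_pi_integrable_prod {ι : Type*} [Fintype ι] {X : Type*} [MeasurableSpace X]
    {μ : Measure X} [SigmaFinite μ] {F : X → ℝ} (h : Integrable F μ) :
    Integrable (fun x : ι → X => ∏ i, F (x i)) (Measure.pi fun _ => μ) := by
  letI : MeasureSpace X := ⟨μ⟩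
  exact Integrable.fintype_prod (f := fun _ => F) (fun _ => h)

lemma aux_pi_integral_prod {ι : Type*} [Fintype ι] {X : Type*} [MeasurableSpace X]
    {μ : Measure X} [SigmaFinite μ] (F : X → ℝ) :
    ∫ x : ι → X, ∏ i, F (x i) ∂(Measure.pi fun _ => μ)
      = (∫ x, F x ∂μ) ^ (Fintype.card ι) := by
  letI : MeasureSpace X := ⟨μ⟩
  exact integral_fintype_prod_eq_pow F

lemma aux_gauss_integrable : Integrable (fun t : ℝ => Real.exp ((1/4) * t ^ 2))
    (gaussianReal 0 1) := by
  rw [gaussianReal_of_var_ne_zero 0 one_ne_zero]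
  rw [integrable_withDensity_iff (measurable_gaussianPDF 0 1)
    (Filter.Eventually.of_forall fun x => ENNReal.ofReal_lt_top)]
  have : ∀ x : ℝ, Real.exp ((1/4) * x ^ 2) * (gaussianPDF 0 1 x).toReal
      = (Real.sqrt (2 * Real.pi))⁻¹ * Real.exp (-(1/4) * x ^ 2) := by
    intro x
    rw [gaussianPDF, ENNReal.toReal_ofReal (gaussianPDFReal_nonneg _ _ _), gaussianPDFReal]
    rw [mul_comm, mul_assoc, ← Real.exp_add]
    norm_num
    ring_nf
    tauto
  simp_rw [this]
  exact (integrable_exp_neg_mul_sq (by norm_num : (0:ℝ) < 1/4)).const_mul _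

lemma aux_uncurry_mp (m D : ℕ) (μ : Measure ℝ) [IsProbabilityMeasure μ] :
    MeasurePreserving (fun (y : Fin m → Fin D → ℝ) (p : Fin m × Fin D) => y p.1 p.2)
      (Measure.pi fun _ : Fin m => (Measure.pi fun _ : Fin D => μ))
      (Measure.pi fun _ : Fin m × Fin D => μ) := by
  have hmeas : Measurable (fun (y : Fin m → Fin D → ℝ) (p : Fin m × Fin D) => y p.1 p.2) :=
    measurable_pi_lambda _ fun p => (measurable_pi_apply p.2).comp (measurable_pi_apply p.1)
  refine ⟨hmeas, ?_⟩
  refine (Measure.pi_eq fun s hs => ?_).symm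
  rw [Measure.map_apply hmeas (MeasurableSet.univ_pi hs)]
  have hpre : (fun (y : Fin m → Fin D → ℝ) (p : Fin m × Fin D) => y p.1 p.2) ⁻¹'
      (Set.pi Set.univ s) = Set.pi Set.univ fun i => Set.pi Set.univ fun k => s (i, k) := by
    ext y
    simp only [Set.mem_preimage, Set.mem_pi, Set.mem_univ, forall_true_left, Prod.forall]
  rw [hpre, Measure.pi_pi]
  simp_rw [Measure.pi_pi]
  rw [Fintype.prod_prod_type]

lemma aux_gle (D : ℕ) (f : ℝ → ℝ) (a b₀ : ℝ) (ha : 0 ≤ a) (hb₀ : 0 ≤ b₀)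
    (hgrow : ∀ x, |f x| ≤ a * |x| + b₀) (W : Matrix (Fin D) (Fin D) ℝ) (b : Fin D → ℝ)
    (γ : Fin D → ℝ) (hγ : ∑ j, γ j ^ 2 = 1) (x : Fin D → ℝ) :
    (∑ j, f (∑ k, W j k * x k + b j) * γ j) ^ 2
      ≤ (4 * a ^ 2 * (∑ j, (b j) ^ 2) + 2 * D * b₀ ^ 2)
        + (4 * a ^ 2 * (∑ j, ∑ k, (W j k) ^ 2) + 1) * ∑ k, (x k) ^ 2 := by
  set S := ∑ k, (x k) ^ 2 with hS
  have hS0 : 0 ≤ S := Finset.sum_nonneg fun k _ => sq_nonneg _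
  have step1 : (∑ j, f (∑ k, W j k * x k + b j) * γ j) ^ 2
      ≤ ∑ j, f (∑ k, W j k * x k + b j) ^ 2 := by
    have := Finset.sum_mul_sq_le_sq_mul_sq Finset.univ
      (fun j => f (∑ k, W j k * x k + b j)) γ
    rw [hγ, mul_one] at this
    exact this
  have step2 : ∀ j : Fin D, f (∑ k, W j k * x k + b j) ^ 2
      ≤ 4 * a ^ 2 * ((∑ k, (W j k) ^ 2) * S) + (4 * a ^ 2 * (b j) ^ 2 + 2 * b₀ ^ 2) := by
    intro j
    set u := ∑ k, W j k * x k with hu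
    have h1 : |f (u + b j)| ≤ a * |u + b j| + b₀ := hgrow _
    have h2 : f (u + b j) ^ 2 ≤ 2 * a ^ 2 * (u + b j) ^ 2 + 2 * b₀ ^ 2 := by
      have h3 : f (u + b j) ^ 2 = |f (u + b j)| ^ 2 := (sq_abs _).symm
      have h4 : |u + b j| ^ 2 = (u + b j) ^ 2 := sq_abs _
      nlinarith [abs_nonneg (f (u + b j)), abs_nonneg (u + b j),
        sq_nonneg (a * |u + b j| - b₀)]
    have hCS2 : u ^ 2 ≤ (∑ k, (W j k) ^ 2) * S :=
      Finset.sum_mul_sq_le_sq_mul_sq Finset.univ (W j) x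
    nlinarith [sq_nonneg (u - b j), sq_nonneg a]
  have step3 : ∑ j, f (∑ k, W j k * x k + b j) ^ 2
      ≤ ∑ j, (4 * a ^ 2 * ((∑ k, (W j k) ^ 2) * S) + (4 * a ^ 2 * (b j) ^ 2 + 2 * b₀ ^ 2)) :=
    Finset.sum_le_sum fun j _ => step2 j
  have e1 : (∑ j, 4 * a ^ 2 * ((∑ k, (W j k) ^ 2) * S))
      = 4 * a ^ 2 * (∑ j, ∑ k, (W j k) ^ 2) * S := by
    rw [show (4:ℝ) * a ^ 2 * (∑ j, ∑ k, (W j k) ^ 2) * S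
      = (4 * a ^ 2 * S) * (∑ j, ∑ k, (W j k) ^ 2) from by ring, Finset.mul_sum]
    exact Finset.sum_congr rfl fun j _ => by ring
  have e2 : (∑ j, (4 * a ^ 2 * (b j) ^ 2 + 2 * b₀ ^ 2))
      = 4 * a ^ 2 * (∑ j, (b j) ^ 2) + 2 * D * b₀ ^ 2 := by
    rw [Finset.sum_add_distrib, Finset.sum_const, Finset.card_univ, Fintype.card_fin,
      Finset.mul_sum, nsmul_eq_mul]
    push_cast
    ring
  have step4 : ∑ j, (4 * a ^ 2 * ((∑ k, (W j k) ^ 2) * S) + (4 * a ^ 2 * (b j) ^ 2 + 2 * b₀ ^ 2))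
      = 4 * a ^ 2 * (∑ j, ∑ k, (W j k) ^ 2) * S
        + (4 * a ^ 2 * (∑ j, (b j) ^ 2) + 2 * D * b₀ ^ 2) := by
    rw [Finset.sum_add_distrib, e1, e2]
  nlinarith [step1, step3, step4]

lemma aux_mgf_bound {E : Type*} [MeasurableSpace E] {ν : Measure E} [IsProbabilityMeasure ν]
    {g H : E → ℝ} (hg : Measurable g) (hg0 : ∀ x, 0 ≤ g x) (hgH : ∀ x, g x ≤ H x)
    (hH : Measurable H) (hH0 : ∀ x, 0 ≤ H x)
    {lam0 : ℝ} (hlam0 : 0 < lam0)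
    (hHint : Integrable (fun x => Real.exp (2 * lam0 * H x)) ν)
    {t : ℝ} (ht : |t| ≤ lam0) {mu K : ℝ} (hmu : mu = ∫ x, g x ∂ν) (hK : K = ∫ x, H x ∂ν) :
    Integrable (fun x => Real.exp (t * (g x - mu))) ν ∧
    ∫ x, Real.exp (t * (g x - mu)) ∂ν
      ≤ 1 + (4 / lam0 ^ 2 * Real.exp (2 * lam0 * K)
          * ∫ x, Real.exp (2 * lam0 * H x) ∂ν) * t ^ 2 := by
  have h2l : (0:ℝ) < 2 * lam0 := by linarith
  have hHle : ∀ x, H x ≤ 1 / (2 * lam0) * Real.exp (2 * lam0 * H x) := by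
    intro x
    have h1 : 2 * lam0 * H x + 1 ≤ Real.exp (2 * lam0 * H x) := Real.add_one_le_exp _
    calc H x = 2 * lam0 * H x / (2 * lam0) := by field_simp
      _ ≤ Real.exp (2 * lam0 * H x) / (2 * lam0) :=
          (div_le_div_iff_of_pos_right h2l).mpr (by linarith)
      _ = 1 / (2 * lam0) * Real.exp (2 * lam0 * H x) := by ring
  have hHint' : Integrable H ν := by
    refine (hHint.const_mul (1 / (2 * lam0))).mono' hH.aestronglyMeasurable ?_
    filter_upwards with x
    rw [Real.norm_eq_abs, abs_of_nonneg (hH0 x)]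
    exact hHle x
  have hgint : Integrable g ν := by
    refine hHint'.mono' hg.aestronglyMeasurable ?_
    filter_upwards with x
    rw [Real.norm_eq_abs, abs_of_nonneg (hg0 x)]
    exact hgH x
  have hmu0 : 0 ≤ mu := hmu ▸ integral_nonneg hg0
  have hmuK : mu ≤ K := by rw [hmu, hK]; exact integral_mono hgint hHint' hgH
  have hK0 : 0 ≤ K := le_trans hmu0 hmuK
  -- pointwise facts
  have habs : ∀ x, |g x - mu| ≤ H x + K := by
    intro x
    rw [abs_le]
    constructor
    · have := hg0 x; have := hH0 x; linarith
    · have := hgH x; linarith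
  have hexp2 : ∀ x, Real.exp (2 * lam0 * |g x - mu|)
      ≤ Real.exp (2 * lam0 * K) * Real.exp (2 * lam0 * H x) := by
    intro x
    rw [← Real.exp_add]
    apply Real.exp_le_exp.mpr
    have := habs x
    nlinarith
  -- integrability of exp (t * (g - mu))
  have hptle : ∀ x, Real.exp (t * (g x - mu))
      ≤ Real.exp (2 * lam0 * K) * Real.exp (2 * lam0 * H x) := by
    intro x
    refine le_trans ?_ (hexp2 x)
    apply Real.exp_le_exp.mpr
    calc t * (g x - mu) ≤ |t * (g x - mu)| := le_abs_self _
      _ = |t| * |g x - mu| := abs_mul _ _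
      _ ≤ lam0 * |g x - mu| := by
          apply mul_le_mul_of_nonneg_right ht (abs_nonneg _)
      _ ≤ 2 * lam0 * |g x - mu| := by nlinarith [abs_nonneg (g x - mu)]
  have hintexp : Integrable (fun x => Real.exp (t * (g x - mu))) ν := by
    refine ((hHint.const_mul (Real.exp (2 * lam0 * K))).mono'
      (((hg.sub measurable_const).const_mul t).exp.aestronglyMeasurable) ?_)
    filter_upwards with x
    rw [Real.norm_eq_abs, abs_of_nonneg (Real.exp_nonneg _)]
    exact hptle x
  refine ⟨hintexp, ?_⟩
  -- pointwise Taylor bound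
  have hpt : ∀ x, Real.exp (t * (g x - mu))
      ≤ 1 + t * (g x - mu)
        + (4 / lam0 ^ 2 * Real.exp (2 * lam0 * K) * Real.exp (2 * lam0 * H x)) * t ^ 2 := by
    intro x
    refine le_trans (aux_exp_taylor (t * (g x - mu))) ?_
    have key : (t * (g x - mu)) ^ 2 * Real.exp |t * (g x - mu)|
        ≤ (4 / lam0 ^ 2 * Real.exp (2 * lam0 * K) * Real.exp (2 * lam0 * H x)) * t ^ 2 := by
      have h1 : |t * (g x - mu)| ≤ lam0 * |g x - mu| := by
        rw [abs_mul]
        apply mul_le_mul_of_nonneg_right ht (abs_nonneg _)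
      have h2 : (g x - mu) ^ 2 ≤ 4 / lam0 ^ 2 * Real.exp (lam0 * |g x - mu|) := by
        have h3 := aux_sq_le_exp (mul_nonneg hlam0.le (abs_nonneg (g x - mu)))
        have h4 : (lam0 * |g x - mu|) ^ 2 = lam0 ^ 2 * (g x - mu) ^ 2 := by
          rw [mul_pow, sq_abs]
        rw [h4] at h3
        rw [div_mul_eq_mul_div, le_div_iff₀ (by positivity : (0:ℝ) < lam0 ^ 2)]
        nlinarith
      have h5 : Real.exp |t * (g x - mu)| ≤ Real.exp (lam0 * |g x - mu|) :=
        Real.exp_le_exp.mpr h1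
      have h6 : Real.exp (lam0 * |g x - mu|) * Real.exp (lam0 * |g x - mu|)
          = Real.exp (2 * lam0 * |g x - mu|) := by
        rw [← Real.exp_add]; ring_nf
      have h7 : (t * (g x - mu)) ^ 2 = t ^ 2 * (g x - mu) ^ 2 := by ring
      have e1 : (0:ℝ) ≤ Real.exp (lam0 * |g x - mu|) := Real.exp_nonneg _
      have e2 : (0:ℝ) ≤ (g x - mu) ^ 2 := sq_nonneg _
      have e3 : (0:ℝ) ≤ t ^ 2 := sq_nonneg _
      calc (t * (g x - mu)) ^ 2 * Real.exp |t * (g x - mu)|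
          ≤ t ^ 2 * (g x - mu) ^ 2 * Real.exp (lam0 * |g x - mu|) := by
            rw [h7]; exact mul_le_mul_of_nonneg_left h5 (by positivity)
        _ ≤ t ^ 2 * (4 / lam0 ^ 2 * Real.exp (lam0 * |g x - mu|))
              * Real.exp (lam0 * |g x - mu|) := by
            apply mul_le_mul_of_nonneg_right _ e1
            exact mul_le_mul_of_nonneg_left h2 e3
        _ = t ^ 2 * (4 / lam0 ^ 2) * Real.exp (2 * lam0 * |g x - mu|) := by
            rw [← h6]; ring
        _ ≤ t ^ 2 * (4 / lam0 ^ 2)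
              * (Real.exp (2 * lam0 * K) * Real.exp (2 * lam0 * H x)) := by
            apply mul_le_mul_of_nonneg_left (hexp2 x) (by positivity)
        _ = (4 / lam0 ^ 2 * Real.exp (2 * lam0 * K) * Real.exp (2 * lam0 * H x)) * t ^ 2 := by
            ring
    linarith
  -- integrate
  set C : ℝ := 4 / lam0 ^ 2 * Real.exp (2 * lam0 * K) with hC
  have hB : Integrable (fun x => C * Real.exp (2 * lam0 * H x) * t ^ 2) ν := by
    have : (fun x => C * Real.exp (2 * lam0 * H x) * t ^ 2)
        = fun x => (C * t ^ 2) * Real.exp (2 * lam0 * H x) := by funext x; ring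
    rw [this]; exact hHint.const_mul _
  have hA : Integrable (fun x => 1 + t * (g x - mu)) ν :=
    (integrable_const (1:ℝ)).add ((hgint.sub (integrable_const mu)).const_mul t)
  have hA1 : Integrable (fun x => t * (g x - mu)) ν :=
    (hgint.sub (integrable_const mu)).const_mul t
  have hrhsint : Integrable (fun x => 1 + t * (g x - mu)
      + C * Real.exp (2 * lam0 * H x) * t ^ 2) ν := hA.add hB
  have hmono := integral_mono hintexp hrhsint hpt
  refine le_trans hmono ?_
  have hsplit : ∫ x, (1 + t * (g x - mu) + C * Real.exp (2 * lam0 * H x) * t ^ 2) ∂ν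
      = (∫ x, (1 + t * (g x - mu)) ∂ν) + ∫ x, C * Real.exp (2 * lam0 * H x) * t ^ 2 ∂ν :=
    integral_add hA hB
  have hsplit2 : ∫ x, (1 + t * (g x - mu)) ∂ν
      = (∫ _x, (1:ℝ) ∂ν) + ∫ x, t * (g x - mu) ∂ν := integral_add (integrable_const 1) hA1
  have hzero : ∫ x, t * (g x - mu) ∂ν = 0 := by
    rw [integral_const_mul, integral_sub hgint (integrable_const mu), integral_const]
    simp only [measure_univ, probReal_univ, ENNReal.toReal_one, one_smul, smul_eq_mul, one_mul]
    rw [← hmu, sub_self, mul_zero]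
  have hlast : ∫ x, C * Real.exp (2 * lam0 * H x) * t ^ 2 ∂ν
      = (C * ∫ x, Real.exp (2 * lam0 * H x) ∂ν) * t ^ 2 := by
    have : (fun x => C * Real.exp (2 * lam0 * H x) * t ^ 2)
        = fun x => (C * t ^ 2) * Real.exp (2 * lam0 * H x) := by funext x; ring
    rw [this, integral_const_mul]; ring
  rw [hsplit, hsplit2, hzero, hlast, integral_const]
  simp only [measure_univ, probReal_univ, ENNReal.toReal_one, one_smul, smul_eq_mul, mul_one]
  linarith

set_option maxHeartbeats 1000000 in
/-- For measurable `f : ℝ → ℝ` growing at most linearly, fixed `W, b`, and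
i.i.d. `ε_1, …, ε_m ~ N(0, I_D)` with `h i = W (ε i) + b`, for a fixed unit vector `γ`
and `E_γ := E[(∑ j, f (h 1 j) * γ j)²]`, there is `c > 0` depending only on `f, W, b`
such that for every `ε ∈ (0,1)`,
`P(|(1/m) ∑ i, (∑ j, f (h i j) * γ j)² − E_γ| ≥ ε) ≤ 2 exp(−c m ε²)`. -/
theorem stmt_4 (D : ℕ) (f : ℝ → ℝ) (hf : Measurable f)
    (a b₀ : ℝ) (ha : 0 ≤ a) (hb₀ : 0 ≤ b₀) (hgrow : ∀ x, |f x| ≤ a * |x| + b₀)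
    (W : Matrix (Fin D) (Fin D) ℝ) (b : Fin D → ℝ) :
    ∃ c : ℝ, 0 < c ∧
      ∀ (m : ℕ) (γ : Fin D → ℝ), (∑ j, (γ j) ^ 2 = 1) →
        ∀ ε : ℝ, ε ∈ Set.Ioo (0 : ℝ) 1 →
          (Measure.pi fun _ : Fin m × Fin D => gaussianReal 0 1)
            {ω | ε ≤
              |(1 / (m : ℝ)) * ∑ i : Fin m,
                  (∑ j, f (∑ k, W j k * ω (i, k) + b j) * γ j) ^ 2
                - ∫ x : Fin D → ℝ, (∑ j, f (∑ k, W j k * x k + b j) * γ j) ^ 2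
                    ∂(Measure.pi fun _ : Fin D => gaussianReal 0 1)|}
            ≤ ENNReal.ofReal (2 * Real.exp (-(c * m * ε ^ 2))) := by
  classical
  set ν : Measure (Fin D → ℝ) := Measure.pi fun _ : Fin D => gaussianReal 0 1 with hν
  set A : ℝ := 4 * a ^ 2 * (∑ j, (b j) ^ 2) + 2 * D * b₀ ^ 2 with hAdef
  set B : ℝ := 4 * a ^ 2 * (∑ j, ∑ k, (W j k) ^ 2) + 1 with hBdef
  have hA0 : 0 ≤ A := by
    have h1 : (0:ℝ) ≤ ∑ j, (b j) ^ 2 := Finset.sum_nonneg fun j _ => sq_nonneg _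
    have h2 : (0:ℝ) ≤ (D:ℝ) := Nat.cast_nonneg _
    positivity
  have hB1 : 1 ≤ B := by
    have h1 : (0:ℝ) ≤ ∑ j, ∑ k, (W j k) ^ 2 :=
      Finset.sum_nonneg fun j _ => Finset.sum_nonneg fun k _ => sq_nonneg _
    nlinarith [sq_nonneg a]
  have hB0 : 0 < B := by linarith
  set lam0 : ℝ := 1 / (8 * B) with hlam0def
  have hlam0 : 0 < lam0 := by positivity
  set H : (Fin D → ℝ) → ℝ := fun x => A + B * ∑ k, (x k) ^ 2 with hHdef
  have hHmeas : Measurable H :=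
    measurable_const.add ((Finset.measurable_sum Finset.univ fun k _ =>
      (measurable_pi_apply k).pow_const 2).const_mul B)
  have hH0 : ∀ x, 0 ≤ H x := by
    intro x
    have : (0:ℝ) ≤ ∑ k, (x k) ^ 2 := Finset.sum_nonneg fun k _ => sq_nonneg _
    have := hB0
    simp only [hHdef]
    nlinarith
  have h2lB : 2 * lam0 * B = 1 / 4 := by
    rw [hlam0def]; field_simp; ring
  have hexpH : (fun x : Fin D → ℝ => Real.exp (2 * lam0 * H x))
      = fun x => Real.exp (2 * lam0 * A) * ∏ k, Real.exp ((1/4) * (x k) ^ 2) := by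
    funext x
    rw [← Real.exp_sum]
    rw [← Real.exp_add]
    congr 1
    rw [← Finset.mul_sum]
    simp only [hHdef]
    rw [mul_add, ← mul_assoc, h2lB]
  have hHint : Integrable (fun x => Real.exp (2 * lam0 * H x)) ν := by
    rw [hexpH]
    exact (aux_pi_integrable_prod aux_gauss_integrable).const_mul _
  set K : ℝ := ∫ x, H x ∂ν with hKdef
  set Mν : ℝ := 4 / lam0 ^ 2 * Real.exp (2 * lam0 * K)
    * ∫ x, Real.exp (2 * lam0 * H x) ∂ν with hMνdef
  have hMν0 : 0 ≤ Mν := by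
    have h1 : (0:ℝ) ≤ ∫ x, Real.exp (2 * lam0 * H x) ∂ν :=
      integral_nonneg fun x => Real.exp_nonneg _
    positivity
  set M' : ℝ := max Mν (1 / (2 * lam0)) with hM'def
  have hMνle : Mν ≤ M' := le_max_left _ _
  have hM'pos : 0 < M' := lt_of_lt_of_le (by positivity) (le_max_right _ _)
  have hM'lam0 : 1 / (2 * M') ≤ lam0 := by
    have h1 : 1 / (2 * lam0) ≤ M' := le_max_right _ _
    rw [div_le_iff₀ (by positivity)]
    rw [div_le_iff₀ (by positivity)] at h1
    nlinarith
  refine ⟨1 / (4 * M'), by positivity, ?_⟩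
  intro m γ hγ ε hε
  obtain ⟨hε0, hε1⟩ := hε
  -- g and its properties
  set g : (Fin D → ℝ) → ℝ := fun x => (∑ j, f (∑ k, W j k * x k + b j) * γ j) ^ 2 with hgdef
  have hgmeas : Measurable g := by
    apply Measurable.pow_const
    apply Finset.measurable_sum
    intro j _
    exact (hf.comp ((Finset.measurable_sum Finset.univ fun k _ =>
      (measurable_pi_apply k : Measurable fun x : Fin D → ℝ => x k).const_mul (W j k)).add_const (b j))).mul_const (γ j)
  have hg0 : ∀ x, 0 ≤ g x := fun x => sq_nonneg _
  have hgH : ∀ x, g x ≤ H x := fun x => aux_gle D f a b₀ ha hb₀ hgrow W b γ hγ x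
  set mu : ℝ := ∫ x, g x ∂ν with hmudef
  rcases Nat.eq_zero_or_pos m with hm | hm
  · subst hm
    calc (Measure.pi fun _ : Fin 0 × Fin D => gaussianReal 0 1) _
        ≤ (Measure.pi fun _ : Fin 0 × Fin D => gaussianReal 0 1) Set.univ :=
          measure_mono (Set.subset_univ _)
      _ = 1 := measure_univ
      _ ≤ ENNReal.ofReal (2 * Real.exp (-(1 / (4 * M') * (0:ℕ) * ε ^ 2))) := by
          simp only [Nat.cast_zero, mul_zero, zero_mul, neg_zero, Real.exp_zero, mul_one]
          exact ENNReal.one_le_ofReal.mpr (by norm_num)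
  · -- main case m ≥ 1
    have hmR : (0:ℝ) < (m:ℝ) := by exact_mod_cast hm
    set P : Measure (Fin m → Fin D → ℝ) := Measure.pi fun _ : Fin m => ν with hPdef
    set X : (Fin m → Fin D → ℝ) → ℝ := fun y => ∑ i, (g (y i) - mu) with hXdef
    have hXmeas : Measurable X :=
      Finset.measurable_sum Finset.univ fun i _ =>
        (hgmeas.comp (measurable_pi_apply i)).sub measurable_const
    set lam : ℝ := ε / (2 * M') with hlamdef
    have h2M : (0:ℝ) < 2 * M' := by linarith
    have hlampos : 0 < lam := div_pos hε0 h2M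
    have hlamle : lam ≤ lam0 := by
      have h1 : lam ≤ 1 / (2 * M') := by
        rw [hlamdef]
        gcongr
        
      linarith
    -- per-coordinate mgf bounds for t = lam and t = -lam
    have key : ∀ t : ℝ, |t| ≤ lam0 →
        Integrable (fun y => Real.exp (t * X y)) P ∧
        ∫ y, Real.exp (t * X y) ∂P ≤ Real.exp (M' * t ^ 2 * m) := by
      intro t ht
      obtain ⟨hint1, hbound1⟩ := aux_mgf_bound hgmeas hg0 hgH hHmeas hH0 hlam0 hHint ht
        hmudef hKdef
      have hrw : (fun y : Fin m → Fin D → ℝ => Real.exp (t * X y))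
          = fun y => ∏ i, Real.exp (t * (g (y i) - mu)) := by
        funext y
        rw [hXdef]
        simp only []
        rw [Finset.mul_sum, Real.exp_sum]
      constructor
      · rw [hrw]
        exact aux_pi_integrable_prod hint1
      · rw [hrw, aux_pi_integral_prod (fun x => Real.exp (t * (g x - mu)))]
        have hbase0 : 0 ≤ ∫ x, Real.exp (t * (g x - mu)) ∂ν :=
          integral_nonneg fun x => Real.exp_nonneg _
        have hb2 : ∫ x, Real.exp (t * (g x - mu)) ∂ν ≤ Real.exp (M' * t ^ 2) := by
          have h3 : 1 + Mν * t ^ 2 ≤ Real.exp (M' * t ^ 2) := by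
            have h4 : Mν * t ^ 2 ≤ M' * t ^ 2 :=
              mul_le_mul_of_nonneg_right hMνle (sq_nonneg _)
            have h5 := Real.add_one_le_exp (M' * t ^ 2)
            linarith
          calc ∫ x, Real.exp (t * (g x - mu)) ∂ν ≤ 1 + Mν * t ^ 2 := hbound1
            _ ≤ Real.exp (M' * t ^ 2) := h3
        calc (∫ x, Real.exp (t * (g x - mu)) ∂ν) ^ Fintype.card (Fin m)
            ≤ Real.exp (M' * t ^ 2) ^ Fintype.card (Fin m) :=
              pow_le_pow_left₀ hbase0 hb2 _
          _ = Real.exp (M' * t ^ 2 * m) := by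
              rw [Fintype.card_fin, ← Real.exp_nat_mul]
              ring_nf
    -- Chernoff for both tails
    haveI hPprob : IsProbabilityMeasure P := by
      rw [hPdef, hν]; infer_instance
    have habs_lam : |lam| ≤ lam0 := by rw [abs_of_pos hlampos]; exact hlamle
    have habs_neglam : |(-lam)| ≤ lam0 := by rw [abs_neg, abs_of_pos hlampos]; exact hlamle
    have hmgfbound : ∀ t : ℝ, |t| ≤ lam0 → mgf X P t ≤ Real.exp (M' * t ^ 2 * m) :=
      fun t ht => (key t ht).2
    have hup : (P {y | (m:ℝ) * ε ≤ X y}).toReal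
        ≤ Real.exp (-(lam * ((m:ℝ) * ε)) + M' * lam ^ 2 * m) := by
      refine le_trans (measure_ge_le_exp_mul_mgf ((m:ℝ) * ε) hlampos.le (key lam habs_lam).1) ?_
      rw [Real.exp_add, neg_mul]
      exact mul_le_mul_of_nonneg_left (hmgfbound lam habs_lam) (Real.exp_nonneg _)
    have hlow : (P {y | X y ≤ -((m:ℝ) * ε)}).toReal
        ≤ Real.exp (-(lam * ((m:ℝ) * ε)) + M' * lam ^ 2 * m) := by
      refine le_trans (measure_le_le_exp_mul_mgf (-((m:ℝ) * ε)) (neg_nonpos.mpr hlampos.le)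
        (key (-lam) habs_neglam).1) ?_
      have he : -(-lam) * -((m:ℝ) * ε) = -(lam * ((m:ℝ) * ε)) := by ring
      rw [he, Real.exp_add]
      have h2 := hmgfbound (-lam) habs_neglam
      rw [neg_sq] at h2
      exact mul_le_mul_of_nonneg_left h2 (Real.exp_nonneg _)
    have hexpeq : -(lam * ((m:ℝ) * ε)) + M' * lam ^ 2 * m
        = -(1 / (4 * M') * (m:ℝ) * ε ^ 2) := by
      rw [hlamdef]
      field_simp
      ring
    rw [hexpeq] at hup hlow
    -- event inclusion and transfer
    have hmp := aux_uncurry_mp m D (gaussianReal 0 1)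
    have hsum_meas : Measurable (fun ω : (Fin m × Fin D) → ℝ =>
        1 / (m:ℝ) * ∑ i : Fin m, (∑ j, f (∑ k, W j k * ω (i, k) + b j) * γ j) ^ 2 - mu) := by
      apply Measurable.sub _ measurable_const
      apply Measurable.const_mul
      apply Finset.measurable_sum; intro i _
      apply Measurable.pow_const
      apply Finset.measurable_sum; intro j _
      exact (hf.comp ((Finset.measurable_sum Finset.univ fun k _ =>
        (measurable_pi_apply (i, k) : Measurable fun x : Fin m × Fin D → ℝ => x (i, k)).const_mul (W j k)).add_const (b j))).mul_const (γ j)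
    have hEmeas : MeasurableSet {ω : (Fin m × Fin D) → ℝ | ε ≤
        |1 / (m:ℝ) * ∑ i : Fin m, (∑ j, f (∑ k, W j k * ω (i, k) + b j) * γ j) ^ 2 - mu|} :=
      measurableSet_le measurable_const hsum_meas.abs
    rw [← hmp.measure_preimage hEmeas.nullMeasurableSet]
    have key2 : ∀ y : Fin m → Fin D → ℝ,
        ε ≤ |1 / (m:ℝ) * ∑ i : Fin m, (∑ j, f (∑ k, W j k * y i k + b j) * γ j) ^ 2 - mu| →
        ((m:ℝ) * ε ≤ X y ∨ X y ≤ -((m:ℝ) * ε)) := by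
      intro y hy
      have hgy : ∀ i : Fin m, (∑ j, f (∑ k, W j k * y i k + b j) * γ j) ^ 2 = g (y i) :=
        fun i => rfl
      simp_rw [hgy] at hy
      have hXy : X y = (∑ i, g (y i)) - (m:ℝ) * mu := by
        rw [hXdef]
        simp only []
        rw [Finset.sum_sub_distrib, Finset.sum_const, Finset.card_univ, Fintype.card_fin,
          nsmul_eq_mul]
      have heq : 1 / (m:ℝ) * ∑ i, g (y i) - mu = X y / m := by
        rw [hXy]; field_simp
      rw [heq, abs_div, abs_of_pos hmR] at hy
      have h3 : (m:ℝ) * ε ≤ |X y| := by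
        rw [le_div_iff₀ hmR] at hy; linarith
      rcases le_abs.mp h3 with h | h
      · exact Or.inl h
      · exact Or.inr (by linarith [neg_abs_le (X y), abs_le.mp (le_refl |X y|)])
    have hsubset : ((fun (y : Fin m → Fin D → ℝ) (p : Fin m × Fin D) => y p.1 p.2) ⁻¹'
        {ω : (Fin m × Fin D) → ℝ | ε ≤ |1 / (m:ℝ) * ∑ i : Fin m,
          (∑ j, f (∑ k, W j k * ω (i, k) + b j) * γ j) ^ 2 - mu|})
        ⊆ {y : Fin m → Fin D → ℝ | (m:ℝ) * ε ≤ X y} ∪ {y | X y ≤ -((m:ℝ) * ε)} := by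
      intro y hy
      simp only [Set.mem_preimage, Set.mem_setOf_eq] at hy
      rcases key2 y hy with h | h
      · exact Or.inl h
      · exact Or.inr h
    refine le_trans (measure_mono hsubset) ?_
    refine le_trans (measure_union_le _ _) ?_
    have h1' : P {y | (m:ℝ) * ε ≤ X y}
        ≤ ENNReal.ofReal (Real.exp (-(1 / (4 * M') * (m:ℝ) * ε ^ 2))) :=
      (ENNReal.le_ofReal_iff_toReal_le (measure_ne_top _ _) (Real.exp_nonneg _)).mpr hup
    have h2' : P {y | X y ≤ -((m:ℝ) * ε)}
        ≤ ENNReal.ofReal (Real.exp (-(1 / (4 * M') * (m:ℝ) * ε ^ 2))) :=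
      (ENNReal.le_ofReal_iff_toReal_le (measure_ne_top _ _) (Real.exp_nonneg _)).mpr hlow
    calc P {y | (m:ℝ) * ε ≤ X y} + P {y | X y ≤ -((m:ℝ) * ε)}
        ≤ ENNReal.ofReal (Real.exp (-(1 / (4 * M') * (m:ℝ) * ε ^ 2)))
          + ENNReal.ofReal (Real.exp (-(1 / (4 * M') * (m:ℝ) * ε ^ 2))) :=
          add_le_add h1' h2'
      _ = ENNReal.ofReal (2 * Real.exp (-(1 / (4 * M') * (m:ℝ) * ε ^ 2))) := by
          rw [← ENNReal.ofReal_add (Real.exp_nonneg _) (Real.exp_nonneg _)]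
          congr 1
          ring
end
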